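/- For every multigraph G, every edge e of G, and every m ∈ ℕ: P_DP(G-e,m) - P*_DP(G·e,m) ≤ P_DP(G,m). -/

import Mathlib

/-- A finite-multiplicity loopless multigraph on vertex set `V`:
`mult u v` is the number of parallel edges joining `u` and `v`. -/
structure Multigraph (V : Type) where
  mult : V → V → ℕ
  symm : ∀ u v, mult u v = mult v u
  loopless : ∀ v, mult v v = 0

/-- A full `m`-fold cover of a multigraph `G`.  The list of a vertex `u` is
identified with `{u} × Fin m`; for each ordered pair `(u,v)` and each edge index
`i` (only indices `i < G.mult u v` are relevant) the corresponding perfect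
matching between the two lists is recorded as a permutation of `Fin m`, the two
orientations of an edge giving inverse permutations. -/
structure FullCover {V : Type} (G : Multigraph V) (m : ℕ) where
  perm : V → V → ℕ → (Fin m ≃ Fin m)
  compat : ∀ u v i, perm v u i = (perm u v i).symm

/-- `f` (choosing one list element per vertex) is an `H`-coloring: it avoids all
cross edges of the cover. -/
def FullCover.IsColoring {V : Type} {G : Multigraph V} {m : ℕ}
    (c : FullCover G m) (f : V → Fin m) : Prop :=
  ∀ u v i, i < G.mult u v → (c.perm u v i) (f u) ≠ f v

/-- The number of `H`-colorings of `G` for the cover `c`. -/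
noncomputable def FullCover.numColorings {V : Type} {G : Multigraph V} {m : ℕ}
    (c : FullCover G m) : ℕ :=
  Nat.card {f : V → Fin m // c.IsColoring f}

/-- The DP color function: the minimum number of colorings over all full
`m`-fold covers. -/
noncomputable def Multigraph.PDP {V : Type} (G : Multigraph V) (m : ℕ) : ℕ :=
  sInf {n | ∃ c : FullCover G m, n = c.numColorings}

/-- The dual DP color function: the maximum number of colorings over all full
`m`-fold covers. -/
noncomputable def Multigraph.PDPdual {V : Type} (G : Multigraph V) (m : ℕ) : ℕ :=
  sSup {n | ∃ c : FullCover G m, n = c.numColorings}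

/-- The number of proper `m`-colorings of (the underlying graph of) `G`. -/
noncomputable def Multigraph.properCount {V : Type} (G : Multigraph V) (m : ℕ) : ℕ :=
  Nat.card {f : V → Fin m // ∀ u v, 0 < G.mult u v → f u ≠ f v}
/-- The multigraph obtained from `G` by deleting one of the edges joining
`u` and `v`. -/
def Multigraph.deleteEdge {V : Type} [DecidableEq V] (G : Multigraph V) (u v : V) :
    Multigraph V where
  mult x y := if (x = u ∧ y = v) ∨ (x = v ∧ y = u) then G.mult x y - 1 else G.mult x y
  symm := by
    intro x y
    try dsimp only
    by_cases h : (x = u ∧ y = v) ∨ (x = v ∧ y = u)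
    · rw [if_pos h, if_pos (by tauto), G.symm]
    · rw [if_neg h, if_neg (by tauto), G.symm]
  loopless := by
    intro x
    try dsimp only
    by_cases h : (x = u ∧ x = v) ∨ (x = v ∧ x = u)
    · rw [if_pos h, G.loopless]
    · rw [if_neg h, G.loopless]

/-- The multigraph obtained from `G` by contracting an edge joining `u` and `v`:
the vertex `v` is removed, the merged vertex is `u`, loops created at the merged
vertex are deleted, and all other parallel edges are retained. -/
def Multigraph.contractEdge {V : Type} [DecidableEq V] (G : Multigraph V) (u v : V) :
    Multigraph {x : V // x ≠ v} where
  mult x y :=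
    if x.1 = u ∧ y.1 = u then 0
    else if x.1 = u then G.mult u y.1 + G.mult v y.1
    else if y.1 = u then G.mult x.1 u + G.mult x.1 v
    else G.mult x.1 y.1
  symm := by
    intro x y
    try dsimp only
    by_cases h1 : x.1 = u <;> by_cases h2 : y.1 = u <;>
      simp only [h1, h2, and_true, and_false, true_and, false_and, if_true, if_false,
        ite_true, ite_false, if_pos, if_neg, not_false_iff] <;>
      first
        | rfl
        | (rw [G.symm u, G.symm v])
        | rw [G.symm]
  loopless := by
    intro x
    try dsimp only
    by_cases h : x.1 = u
    · rw [if_pos ⟨h, h⟩]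
    · rw [if_neg (by tauto), if_neg h, if_neg h, G.loopless]

/-- The cover of `G - e` induced by a cover of `G`, where `e` is the `i`-th edge
joining `u` and `v`: the matching of `e` is deleted and the remaining matchings
between the lists of `u` and `v` are reindexed. -/
def FullCover.deleteEdge {V : Type} [DecidableEq V] {G : Multigraph V} {m : ℕ}
    (c : FullCover G m) (u v : V) (i : ℕ) : FullCover (G.deleteEdge u v) m where
  perm x y j :=
    if (x = u ∧ y = v) ∨ (x = v ∧ y = u) then
      c.perm x y (if j < i then j else j + 1)
    else c.perm x y j
  compat := by
    intro x y j
    try dsimp only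
    by_cases h : (x = u ∧ y = v) ∨ (x = v ∧ y = u)
    · rw [if_pos (by tauto), if_pos h, c.compat]
    · rw [if_neg (by tauto), if_neg h, c.compat]

/-- The cover of `G · e` induced by a cover of `G`, where `e` is the `i`-th edge
joining `u` and `v`: the lists of `u` and `v` are merged along the matching of
`e` (with the merged vertex labelled `u`), and all other matchings are carried
over accordingly. -/
def FullCover.contractEdge {V : Type} [DecidableEq V] {G : Multigraph V} {m : ℕ}
    (c : FullCover G m) (u v : V) (i : ℕ) : FullCover (G.contractEdge u v) m where
  perm x y j :=
    if x.1 = u ∧ y.1 = u then Equiv.refl _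
    else if x.1 = u then
      (if j < G.mult u y.1 then c.perm u y.1 j
       else (c.perm u v i).trans (c.perm v y.1 (j - G.mult u y.1)))
    else if y.1 = u then
      (if j < G.mult x.1 u then c.perm x.1 u j
       else (c.perm x.1 v (j - G.mult x.1 u)).trans (c.perm u v i).symm)
    else c.perm x.1 y.1 j
  compat := by
    intro x y j
    try dsimp only
    by_cases h1 : x.1 = u <;> by_cases h2 : y.1 = u <;>
      simp only [h1, h2, and_true, and_false, true_and, false_and, if_true, if_false,
        ite_true, ite_false, not_false_iff]
    · rfl
    · rw [G.symm y.1 u]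
      by_cases hj : j < G.mult u y.1
      · rw [if_pos hj, if_pos hj, c.compat]
      · rw [if_neg hj, if_neg hj, c.compat]
        rfl
    · rw [G.symm x.1 u]
      by_cases hj : j < G.mult u x.1
      · rw [if_pos hj, if_pos hj, c.compat]
      · rw [if_neg hj, if_neg hj, c.compat x.1 v (j - G.mult u x.1)]
        rfl
    · rw [c.compat]

/-!
Fix an edge `e = uv` of `G` and a full cover `c` of `G` realising `P_DP(G, m)`; delete from it
the matching of `e` to get a cover `c - e` of `G - e`, and merge the lists of `u` and `v` along
that matching to get a cover `c · e` of `G · e`. A `(c - e)`-coloring `f` either avoids the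
matching of `e`, and is then a `c`-coloring, or uses it, and then `f v` is determined by `f u`,
so `f` restricts injectively to a `(c · e)`-coloring. Hence
`P_DP(G - e) ≤ #(c - e) ≤ #c + #(c · e) ≤ P_DP(G) + P*_DP(G · e)`.
-/

theorem Multigraph.ne_of_mult_pos {V : Type} (G : Multigraph V) {u v : V}
    (h : 0 < G.mult u v) : u ≠ v := by
  rintro rfl
  simp [G.loopless] at h

theorem FullCover.perm_apply_eq_comm {V : Type} {G : Multigraph V} {m : ℕ}
    (c : FullCover G m) (u v : V) (i : ℕ) (a b : Fin m) :
    c.perm v u i b = a ↔ c.perm u v i a = b := by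
  rw [c.compat, Equiv.symm_apply_eq, eq_comm]

section Extremal

variable {V : Type} (G : Multigraph V) (m : ℕ)

instance : Inhabited (FullCover G m) :=
  ⟨⟨fun _ _ _ => Equiv.refl _, fun _ _ _ => rfl⟩⟩

theorem Multigraph.PDP_le_numColorings (c : FullCover G m) : G.PDP m ≤ c.numColorings :=
  Nat.sInf_le ⟨c, rfl⟩

theorem Multigraph.exists_numColorings_eq_PDP :
    ∃ c : FullCover G m, c.numColorings = G.PDP m := by
  have hne : {n | ∃ c : FullCover G m, n = c.numColorings}.Nonempty := ⟨_, default, rfl⟩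
  obtain ⟨c, hc⟩ := Nat.sInf_mem hne
  exact ⟨c, hc.symm⟩

theorem Multigraph.numColorings_le_PDPdual [Finite V] (c : FullCover G m) :
    c.numColorings ≤ G.PDPdual m := by
  refine le_csSup ⟨Nat.card (V → Fin m), ?_⟩ ⟨c, rfl⟩
  rintro _ ⟨d, rfl⟩
  exact Nat.card_le_card_of_injective Subtype.val Subtype.val_injective

end Extremal

section DeletionContraction

variable {V : Type} [DecidableEq V] {G : Multigraph V} {m : ℕ} {u v x y : V} {i j : ℕ}

theorem Multigraph.deleteEdge_mult_of_ne (hxy : ¬((x = u ∧ y = v) ∨ (x = v ∧ y = u))) :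
    (G.deleteEdge u v).mult x y = G.mult x y :=
  if_neg hxy

theorem Multigraph.deleteEdge_mult_of_eq (hxy : (x = u ∧ y = v) ∨ (x = v ∧ y = u)) :
    (G.deleteEdge u v).mult x y = G.mult u v - 1 := by
  rcases hxy with ⟨rfl, rfl⟩ | ⟨rfl, rfl⟩
  · exact if_pos (.inl ⟨rfl, rfl⟩)
  · rw [G.symm]
    exact if_pos (.inr ⟨rfl, rfl⟩)

theorem FullCover.deleteEdge_perm_of_ne (c : FullCover G m)
    (hxy : ¬((x = u ∧ y = v) ∨ (x = v ∧ y = u))) :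
    (c.deleteEdge u v i).perm x y j = c.perm x y j :=
  if_neg hxy

theorem FullCover.deleteEdge_perm_of_eq (c : FullCover G m)
    (hxy : (x = u ∧ y = v) ∨ (x = v ∧ y = u)) :
    (c.deleteEdge u v i).perm x y j = c.perm x y (if j < i then j else j + 1) :=
  if_pos hxy

theorem FullCover.IsColoring.perm_apply_ne_of_deleteEdge {c : FullCover G m} {f : V → Fin m}
    (hf : (c.deleteEdge u v i).IsColoring f) (hxy : ¬((x = u ∧ y = v) ∨ (x = v ∧ y = u)))
    (hj : j < G.mult x y) : c.perm x y j (f x) ≠ f y := by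
  have := hf x y j (by rwa [Multigraph.deleteEdge_mult_of_ne hxy])
  rwa [c.deleteEdge_perm_of_ne hxy] at this

theorem FullCover.IsColoring.of_deleteEdge {c : FullCover G m} {f : V → Fin m}
    (hi : i < G.mult u v) (hf : (c.deleteEdge u v i).IsColoring f)
    (hfe : c.perm u v i (f u) ≠ f v) : c.IsColoring f := by
  intro x y j hj
  by_cases hxy : (x = u ∧ y = v) ∨ (x = v ∧ y = u)
  swap
  · exact hf.perm_apply_ne_of_deleteEdge hxy hj
  have hmult : G.mult x y = G.mult u v := by
    rcases hxy with ⟨rfl, rfl⟩ | ⟨rfl, rfl⟩ <;> simp [G.symm]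
  rcases eq_or_ne j i with rfl | hji
  · rcases hxy with ⟨rfl, rfl⟩ | ⟨rfl, rfl⟩
    · exact hfe
    · exact fun h => hfe ((c.perm_apply_eq_comm _ _ _ _ _).1 h)
  -- the `j`-th matching between the lists of `x` and `y`, `j ≠ i`, is the `j'`-th one in `c - e`
  set j' := if j < i then j else j - 1
  have hj' : j' < (G.deleteEdge u v).mult x y := by
    rw [Multigraph.deleteEdge_mult_of_eq hxy]
    simp only [j']
    split_ifs <;> omega
  have hreindex : (if j' < i then j' else j' + 1) = j := by
    simp only [j']
    split_ifs <;> omega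
  simpa only [c.deleteEdge_perm_of_eq hxy, hreindex] using hf x y j' hj'

theorem FullCover.IsColoring.contractEdge_of_deleteEdge {c : FullCover G m} {f : V → Fin m}
    (hf : (c.deleteEdge u v i).IsColoring f) (hfe : c.perm u v i (f u) = f v) :
    (c.contractEdge u v i).IsColoring (fun x => f x.1) := by
  rintro ⟨x, hxv⟩ ⟨y, hyv⟩ j hj
  simp only [Multigraph.contractEdge, FullCover.contractEdge] at hj ⊢
  split_ifs at hj ⊢ with hloop hxu hju hyu hju
  · exact absurd hj (Nat.not_lt_zero j)
  · subst hxu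
    exact hf.perm_apply_ne_of_deleteEdge (by grind) hju
  · subst hxu
    rw [Equiv.trans_apply, hfe]
    exact hf.perm_apply_ne_of_deleteEdge (by grind) (by omega)
  · subst hyu
    exact hf.perm_apply_ne_of_deleteEdge (by grind) hju
  · subst hyu
    rw [Equiv.trans_apply, Ne, Equiv.symm_apply_eq, hfe]
    exact hf.perm_apply_ne_of_deleteEdge (by grind) (by omega)
  · exact hf.perm_apply_ne_of_deleteEdge (by grind) hj

theorem FullCover.numColorings_deleteEdge_le [Finite V] (c : FullCover G m)
    (hi : i < G.mult u v) :
    (c.deleteEdge u v i).numColorings ≤ c.numColorings + (c.contractEdge u v i).numColorings := by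
  have huv : u ≠ v := G.ne_of_mult_pos (Nat.zero_lt_of_lt hi)
  let C := {f : V → Fin m // (c.deleteEdge u v i).IsColoring f}
  let UsesE (f : C) : Prop := c.perm u v i (f.1 u) = f.1 v
  have hsplit : (c.deleteEdge u v i).numColorings =
      Nat.card {f : C // UsesE f} + Nat.card {f : C // ¬UsesE f} := by
    rw [← Nat.card_sum]
    exact Nat.card_congr (Equiv.sumCompl UsesE).symm
  have hcontract : Nat.card {f : C // UsesE f} ≤ (c.contractEdge u v i).numColorings := by
    refine Nat.card_le_card_of_injective
      (fun f => ⟨fun x => f.1.1 x.1, f.1.2.contractEdge_of_deleteEdge f.2⟩) ?_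
    rintro ⟨⟨f, _⟩, hfe⟩ ⟨⟨g, _⟩, hge⟩ hfg
    dsimp only [UsesE] at hfe hge
    have hoff : ∀ x, x ≠ v → f x = g x := fun x hx =>
      congrFun (congrArg Subtype.val hfg) ⟨x, hx⟩
    -- a coloring using `e` is determined off `v`, since `f v` is the partner of `f u`
    have hfg : f = g := funext fun x => by
      by_cases hx : x = v
      · subst hx
        rw [← hfe, ← hge, hoff u huv]
      · exact hoff x hx
    subst hfg
    rfl
  have hcolor : Nat.card {f : C // ¬UsesE f} ≤ c.numColorings :=
    Nat.card_le_card_of_injective (fun f => ⟨f.1.1, f.1.2.of_deleteEdge hi f.2⟩)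
      fun _ _ hfg => Subtype.ext (Subtype.ext (congrArg Subtype.val hfg :))
  omega

end DeletionContraction

/-- Deletion-contraction lower bound for the DP color function: for every
multigraph `G`, edge `e` of `G` (joining `u` and `v`), and every `m`,
`P_DP(G-e,m) - P*_DP(G·e,m) ≤ P_DP(G,m)`. -/
theorem PDP_deletion_contraction_lower {V : Type} [Fintype V] [DecidableEq V]
    (G : Multigraph V) (u v : V) (he : 0 < G.mult u v) (m : ℕ) :
    ((G.deleteEdge u v).PDP m : ℤ) - ((G.contractEdge u v).PDPdual m : ℤ) ≤
      (G.PDP m : ℤ) := by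
  obtain ⟨c, hc⟩ := G.exists_numColorings_eq_PDP m
  have hdelete := (G.deleteEdge u v).PDP_le_numColorings m (c.deleteEdge u v 0)
  have hcontract := (G.contractEdge u v).numColorings_le_PDPdual m (c.contractEdge u v 0)
  have hsplit := c.numColorings_deleteEdge_le he
  omega
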